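/- The 3-SAT instance Γ has a satisfying assignment if and only if there exists a subset T ⊆ P_Γ with |T| = n − z that is separated from the origin with margin width 1/√(l+1), i.e., there exists a unit vector w ∈ ℝ^{l+1} with ⟨w, x⟩ ≥ 1/√(l+1) for every x ∈ T. -/

import Mathlib

/-!
A satisfying assignment `a` gives the unit vector `w = (a, 1) / √(l+1)`: it has margin exactly
`1/√(l+1)` on the signed unit vectors `aᵢ eᵢ` and `e_{l+1}`, and margin
`α (∑ literal values + 3) / √(l+1) ≥ 2α / √(l+1)` on every clause point.

Conversely, a separated `T` cannot contain both `eᵢ` and `-eᵢ`, so `|T| = (l+1) + m` forces `T`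
to contain every clause point and one of `±eᵢ` for each `i`. Hence `|wᵢ| ≥ 1/√(l+1)` for all `i`,
and `‖w‖ = 1` turns this into equality: `w` is a scaled sign vector. A clause point all of whose
literals are false under these signs has margin `≤ 0`, so the signs satisfy every clause.
-/

open Set Finset
open scoped InnerProductSpace

section Counting

variable {β ι : Type*} [Fintype ι]

theorem subset_and_forall_inter_nonempty_of_card_add_ncard_le {T Q : Set β} {P : ι → Set β}
    (hT : T ⊆ (⋃ i, P i) ∪ Q) (hQ : Q.Finite) (hP : ∀ i, (T ∩ P i).Subsingleton)
    (hcard : Fintype.card ι + Q.ncard ≤ T.ncard) : Q ⊆ T ∧ ∀ i, (T ∩ P i).Nonempty := by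
  have hsplit : T = (⋃ i, T ∩ P i) ∪ (T ∩ Q) := by
    rw [← Set.inter_iUnion, ← Set.inter_union_distrib_left, Set.inter_eq_left.mpr hT]
  have hT_le : T.ncard ≤ ∑ i, (T ∩ P i).ncard + (T ∩ Q).ncard := by
    conv_lhs => rw [hsplit]
    exact (ncard_union_le _ _).trans (Nat.add_le_add_right (ncard_iUnion_le_of_fintype _) _)
  have hP_le : ∀ i ∈ (univ : Finset ι), (T ∩ P i).ncard ≤ 1 :=
    fun i _ => (ncard_le_one (hP i).finite).2 (hP i)
  have hsum_le : ∑ i, (T ∩ P i).ncard ≤ Fintype.card ι := by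
    simpa using Finset.sum_le_sum hP_le
  have hQ_le : (T ∩ Q).ncard ≤ Q.ncard := ncard_le_ncard Set.inter_subset_right hQ
  refine ⟨?_, fun i => ?_⟩
  · rw [← eq_of_subset_of_ncard_le (Set.inter_subset_right (s := T)) (by omega) hQ]
    exact Set.inter_subset_left
  · by_contra hi
    have hsum_lt : ∑ i, (T ∩ P i).ncard < ∑ _ : ι, 1 :=
      Finset.sum_lt_sum hP_le ⟨i, mem_univ i, by simp [Set.not_nonempty_iff_eq_empty.mp hi]⟩
    simp only [sum_const, card_univ, smul_eq_mul, mul_one] at hsum_lt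
    omega

end Counting

theorem mul_eq_one_iff_eq_of_sign {c x : ℝ} (hc : c = 1 ∨ c = -1) : c * x = 1 ↔ x = c := by
  rcases hc with rfl | rfl <;> constructor <;> intro h <;> linarith

theorem one_le_mul_sum_add_iff {α σ : ℝ} {t : Fin 3 → ℝ} (hα : 1 / 2 < α)
    (ht : ∀ k, t k = 1 ∨ t k = -1) (hσ : σ = 1 ∨ σ = -1) :
    1 ≤ α * (∑ k, t k + 3 * σ) ↔ σ = 1 ∧ ∃ k, t k = 1 := by
  -- the bracket is an even integer, and it is `≥ 2` exactly when `σ = 1` and some `t k = 1`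
  simp only [Fin.sum_univ_three, Fin.exists_fin_succ, Fin.exists_fin_zero]
  rcases ht 0 with h0 | h0 <;> rcases ht 1 with h1 | h1 <;> rcases ht 2 with h2 | h2 <;>
    rcases hσ with rfl | rfl <;>
    simp only [Fin.succ_zero_eq_one, Fin.succ_one_eq_two, h0, h1, h2] <;>
    norm_num <;> linarith

section Euclidean

variable {ι : Type*}

theorem norm_eq_one_iff_forall_abs_eq [Fintype ι] [Nonempty ι] {w : EuclideanSpace ℝ ι}
    (hw : ∀ i, 1 / √(Fintype.card ι) ≤ |w i|) :
    ‖w‖ = 1 ↔ ∀ i, |w i| = 1 / √(Fintype.card ι) := by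
  set c := 1 / √(Fintype.card ι : ℝ)
  have hc : 0 ≤ c := by positivity
  have hsum : ∑ _ : ι, c ^ 2 = 1 := by
    simp [c, Real.sq_sqrt (Nat.cast_nonneg _)]
  rw [← pow_left_inj₀ (norm_nonneg w) zero_le_one two_ne_zero, one_pow,
    EuclideanSpace.norm_sq_eq, ← hsum]
  simp only [Real.norm_eq_abs]
  rw [eq_comm, Finset.sum_eq_sum_iff_of_le fun i _ => pow_le_pow_left₀ hc (hw i) 2]
  simp only [Finset.mem_univ, true_implies]
  exact forall_congr' fun i => by rw [eq_comm, pow_left_inj₀ (abs_nonneg _) hc two_ne_zero]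

theorem inter_pair_neg_subsingleton {E : Type*} [NormedAddCommGroup E] [InnerProductSpace ℝ E]
    {T : Set E} {w : E} (hT : ∀ x ∈ T, 0 < ⟪w, x⟫_ℝ) (x : E) : (T ∩ {x, -x}).Subsingleton := by
  have hpair : ¬ (x ∈ T ∧ -x ∈ T) := fun ⟨hx, hnx⟩ => by
    have := hT _ hnx
    rw [inner_neg_right] at this
    linarith [hT _ hx]
  rintro a ⟨haT, rfl | rfl⟩ b ⟨hbT, rfl | rfl⟩ <;> first | rfl | exact absurd ⟨‹_›, ‹_›⟩ hpair

variable [DecidableEq ι]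

theorem single_injective_of_ne_zero {s : ι → ℝ} (hs : ∀ i, s i ≠ 0) :
    Function.Injective fun i => EuclideanSpace.single i (s i) := by
  intro i j hij
  by_contra hne
  have := congrArg (· i) hij
  simp [hne] at this
  exact hs i this

variable (ι) in
def signedUnitVectors : Set (EuclideanSpace ℝ ι) :=
  {x | ∃ i, x = EuclideanSpace.single i 1 ∨ x = -EuclideanSpace.single i 1}

theorem signedUnitVectors_subset_iUnion :
    signedUnitVectors ι ⊆ ⋃ i, {EuclideanSpace.single i 1, -EuclideanSpace.single i 1} := by
  rintro x ⟨i, hx⟩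
  exact Set.mem_iUnion.2 ⟨i, hx⟩

theorem single_mem_signedUnitVectors {s : ℝ} (hs : s = 1 ∨ s = -1) (i : ι) :
    EuclideanSpace.single i s ∈ signedUnitVectors ι := by
  rcases hs with rfl | rfl
  exacts [⟨i, Or.inl rfl⟩, ⟨i, Or.inr (PiLp.single_neg 2 i)⟩]

theorem abs_apply_le_one_of_mem_signedUnitVectors {x : EuclideanSpace ℝ ι}
    (hx : x ∈ signedUnitVectors ι) (j : ι) : |x j| ≤ 1 := by
  obtain ⟨i, rfl | rfl⟩ := hx <;> by_cases hij : j = i <;> simp [PiLp.single_apply, hij]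

end Euclidean

section ClausePoint

variable {l m : ℕ} (α : ℝ) (var : Fin m → Fin 3 → Fin l) (sgn : Fin m → Fin 3 → ℝ)

noncomputable def clausePoint (j : Fin m) : EuclideanSpace ℝ (Fin (l + 1)) :=
  (∑ k : Fin 3, (sgn j k * α) • EuclideanSpace.single ((var j k).castSucc) (1 : ℝ))
    + (3 * α) • EuclideanSpace.single (Fin.last l) (1 : ℝ)

theorem inner_clausePoint (v : EuclideanSpace ℝ (Fin (l + 1))) (j : Fin m) :
    ⟪v, clausePoint α var sgn j⟫_ℝ =
      α * (∑ k, sgn j k * v (var j k).castSucc + 3 * v (Fin.last l)) := by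
  simp only [clausePoint, inner_add_right, inner_sum, inner_smul_right,
    EuclideanSpace.inner_single_right, conj_trivial, one_mul, mul_add, Finset.mul_sum]
  congr 1
  · exact Finset.sum_congr rfl fun k _ => by ring
  · ring

theorem clausePoint_apply_last (j : Fin m) : clausePoint α var sgn j (Fin.last l) = 3 * α := by
  have hne : ∀ k, Fin.last l ≠ (var j k).castSucc := fun k => (Fin.castSucc_lt_last _).ne'
  simp [clausePoint, hne]

variable {α var sgn}

theorem clausePoint_not_mem_signedUnitVectors (hα : 1 / 2 < α) (j : Fin m) :
    clausePoint α var sgn j ∉ signedUnitVectors (Fin (l + 1)) := fun h => by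
  have := abs_apply_le_one_of_mem_signedUnitVectors h (Fin.last l)
  rw [clausePoint_apply_last, abs_le] at this
  linarith [this.2]

theorem le_inner_clausePoint_iff (hα : 1 / 2 < α) {j : Fin m}
    (hsgn : ∀ k, sgn j k = 1 ∨ sgn j k = -1) {s : Fin (l + 1) → ℝ}
    (hs : ∀ i, s i = 1 ∨ s i = -1) {h : ℝ} (hh : 0 < h) {w : EuclideanSpace ℝ (Fin (l + 1))}
    (hw : ∀ i, w i = h * s i) :
    h ≤ ⟪w, clausePoint α var sgn j⟫_ℝ ↔
      s (Fin.last l) = 1 ∧ ∃ k, s (var j k).castSucc = sgn j k := by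
  have hinner : ⟪w, clausePoint α var sgn j⟫_ℝ =
      h * (α * (∑ k, sgn j k * s (var j k).castSucc + 3 * s (Fin.last l))) := by
    simp only [inner_clausePoint, hw, mul_left_comm _ h, ← Finset.mul_sum]
    ring
  have hlit : ∀ k, sgn j k * s (var j k).castSucc = 1 ∨ sgn j k * s (var j k).castSucc = -1 := by
    intro k
    rcases hsgn k with h1 | h1 <;> rcases hs (var j k).castSucc with h2 | h2 <;> simp [h1, h2]
  rw [hinner, le_mul_iff_one_le_right hh, one_le_mul_sum_add_iff hα hlit (hs _)]
  simp only [mul_eq_one_iff_eq_of_sign (hsgn _)]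

end ClausePoint

section Reduction

variable {l m : ℕ} {α : ℝ} {var : Fin m → Fin 3 → Fin l} {sgn : Fin m → Fin 3 → ℝ}

theorem exists_separated_of_satisfiable (hα : 1 / 2 < α)
    (hsgn : ∀ j k, sgn j k = 1 ∨ sgn j k = -1) (hinj : Function.Injective (clausePoint α var sgn))
    {a : Fin l → ℝ} (ha : ∀ i, a i = 1 ∨ a i = -1) (hsat : ∀ j, ∃ k, a (var j k) = sgn j k) :
    ∃ T ⊆ signedUnitVectors (Fin (l + 1)) ∪ range (clausePoint α var sgn),
      T.ncard = l + 1 + m ∧ ∃ w : EuclideanSpace ℝ (Fin (l + 1)), ‖w‖ = 1 ∧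
        ∀ x ∈ T, 1 / √((l : ℝ) + 1) ≤ ⟪w, x⟫_ℝ := by
  set h := 1 / √((l : ℝ) + 1)
  have hh : 0 < h := by positivity
  set s : Fin (l + 1) → ℝ := Fin.snoc a 1
  have hs : ∀ i, s i = 1 ∨ s i = -1 :=
    Fin.lastCases (by simp [s]) fun i => by simpa [s] using ha i
  set e : Fin (l + 1) → EuclideanSpace ℝ (Fin (l + 1)) := fun i => EuclideanSpace.single i (s i)
  have he : range e ⊆ signedUnitVectors (Fin (l + 1)) :=
    range_subset_iff.2 fun i => single_mem_signedUnitVectors (hs i) i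
  have he_ne : ∀ i j, e i ≠ clausePoint α var sgn j := fun i j hij =>
    clausePoint_not_mem_signedUnitVectors hα j (hij ▸ he (mem_range_self i))
  have he_inj : Function.Injective e :=
    single_injective_of_ne_zero fun i => by rcases hs i with hi | hi <;> simp [hi]
  refine ⟨range (Sum.elim e (clausePoint α var sgn)), ?_, ?_,
    WithLp.toLp 2 fun i => h * s i, ?_, ?_⟩
  · rw [Set.Sum.elim_range]
    exact union_subset_union_left _ he
  · rw [ncard_range_of_injective (he_inj.sumElim hinj he_ne)]
    simp
  · refine (norm_eq_one_iff_forall_abs_eq fun i => ?_).2 fun i => ?_ <;>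
      rcases hs i with hi | hi <;> simp [hi, h, abs_of_nonneg (Real.sqrt_nonneg _)]
  · rintro x ⟨i | j, rfl⟩
    · rcases hs i with hi | hi <;> simp [e, EuclideanSpace.inner_single_right, hi]
    · refine (le_inner_clausePoint_iff hα (hsgn j) hs hh fun _ => rfl).2 ⟨?_, ?_⟩
      · simp [s]
      · simpa [s] using hsat j

theorem satisfiable_of_separated (hα : 1 / 2 < α) (hsgn : ∀ j k, sgn j k = 1 ∨ sgn j k = -1)
    {T : Set (EuclideanSpace ℝ (Fin (l + 1)))}
    (hT : T ⊆ signedUnitVectors (Fin (l + 1)) ∪ range (clausePoint α var sgn))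
    (hcard : l + 1 + m ≤ T.ncard) {w : EuclideanSpace ℝ (Fin (l + 1))} (hw : ‖w‖ = 1)
    (hsep : ∀ x ∈ T, 1 / √((l : ℝ) + 1) ≤ ⟪w, x⟫_ℝ) :
    ∃ a : Fin l → ℝ, (∀ i, a i = 1 ∨ a i = -1) ∧ ∀ j, ∃ k, a (var j k) = sgn j k := by
  set h := 1 / √((l : ℝ) + 1)
  have hh : 0 < h := by positivity
  have hQ_card : (range (clausePoint α var sgn)).ncard ≤ m := by
    simpa [← Nat.card_coe_set_eq] using Finite.card_range_le (clausePoint α var sgn)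
  obtain ⟨hQ, hU⟩ := subset_and_forall_inter_nonempty_of_card_add_ncard_le
    (hT.trans (union_subset_union_left _ signedUnitVectors_subset_iUnion)) (finite_range _)
    (fun i => inter_pair_neg_subsingleton (fun x hx => hh.trans_le (hsep x hx)) _)
    (by simp only [Fintype.card_fin]; omega)
  have habs_ge : ∀ i, h ≤ |w i| := fun i => by
    obtain ⟨x, hxT, rfl | rfl⟩ := hU i <;> have hx := hsep _ hxT <;>
      simp only [inner_neg_right, EuclideanSpace.inner_single_right, conj_trivial, one_mul]
        at hx <;>
      linarith [le_abs_self (w i), neg_abs_le (w i)]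
  have habs : ∀ i, |w i| = h := by
    simpa [h] using (norm_eq_one_iff_forall_abs_eq (by simpa [h] using habs_ge)).1 hw
  set s : Fin (l + 1) → ℝ := fun i => w i / h
  have hs : ∀ i, s i = 1 ∨ s i = -1 := fun i => by
    rcases (abs_eq hh.le).1 (habs i) with hi | hi <;> simp [s, hi, hh.ne']
  have hw_eq : ∀ i, w i = h * s i := fun i => (mul_div_cancel₀ (w i) hh.ne').symm
  refine ⟨fun i => s i.castSucc, fun i => hs _, fun j => ?_⟩
  exact ((le_inner_clausePoint_iff hα (hsgn j) hs hh hw_eq).1 (hsep _ (hQ ⟨j, rfl⟩))).2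

end Reduction

theorem satisfiable_iff_margin_general
    (l m : ℕ) (α : ℝ) (hα : 1 / 2 < α)
    -- the 3-SAT instance: clause j has literals (var j k, sgn j k) for k : Fin 3
    (var : Fin m → Fin 3 → Fin l) (sgn : Fin m → Fin 3 → ℝ)
    (hsgn : ∀ j k, sgn j k = 1 ∨ sgn j k = -1)
    -- the points q_j
    (q : Fin m → EuclideanSpace ℝ (Fin (l + 1)))
    (hq : ∀ j, q j =
      (∑ k : Fin 3, (sgn j k * α) • EuclideanSpace.single ((var j k).castSucc) (1 : ℝ))
        + (3 * α) • EuclideanSpace.single (Fin.last l) (1 : ℝ))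
    (hqinj : Function.Injective q)
    -- the point sets U, Q and P_Γ = U ∪ Q
    (U Q PΓ : Set (EuclideanSpace ℝ (Fin (l + 1))))
    (hU : U = {x | ∃ i : Fin (l + 1),
      x = EuclideanSpace.single i (1 : ℝ) ∨ x = -EuclideanSpace.single i (1 : ℝ)})
    (hQ : Q = Set.range q)
    (hP : PΓ = U ∪ Q)
    (n z : ℕ) (hn : n = 2 * (l + 1) + m) (hz : z = l + 1) :
    (∃ a : Fin l → ℝ, (∀ i, a i = 1 ∨ a i = -1) ∧ ∀ j : Fin m, ∃ k : Fin 3,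
        a (var j k) = sgn j k) ↔
      (∃ T ⊆ PΓ, T.ncard = n - z ∧ ∃ w : EuclideanSpace ℝ (Fin (l + 1)), ‖w‖ = 1 ∧
        ∀ x ∈ T, @inner ℝ _ _ w x ≥ 1 / Real.sqrt ((l : ℝ) + 1)) := by
  obtain rfl : q = clausePoint α var sgn := funext hq
  subst hU hQ hP hn hz
  constructor
  · rintro ⟨a, ha, hsat⟩
    obtain ⟨T, hT, hcard, hsep⟩ := exists_separated_of_satisfiable hα hsgn hqinj ha hsat
    exact ⟨T, hT, by omega, hsep⟩
  · rintro ⟨T, hT, hcard, w, hw, hsep⟩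
    exact satisfiable_of_separated hα hsgn hT (by omega) hw hsep

/-- The 3-SAT instance `Γ` has a satisfying assignment if and only if there exists
a subset `T ⊆ P_Γ` with `|T| = n − z` that is separated from the origin with margin width
`1/√(l+1)`, i.e., there exists a unit vector `w ∈ ℝ^{l+1}` with `⟨w, x⟩ ≥ 1/√(l+1)` for every
`x ∈ T`. -/
theorem satisfiable_iff_margin
    (l m : ℕ) (hl : 1 ≤ l) (hm : 1 ≤ m) (α : ℝ) (hα : 1 / 2 < α)
    -- the 3-SAT instance: clause j has literals (var j k, sgn j k) for k : Fin 3
    (var : Fin m → Fin 3 → Fin l) (sgn : Fin m → Fin 3 → ℝ)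
    (hsgn : ∀ j k, sgn j k = 1 ∨ sgn j k = -1)
    (hvar : ∀ j, Function.Injective (var j))
    -- the points q_j
    (q : Fin m → EuclideanSpace ℝ (Fin (l + 1)))
    (hq : ∀ j, q j =
      (∑ k : Fin 3, (sgn j k * α) • EuclideanSpace.single ((var j k).castSucc) (1 : ℝ))
        + (3 * α) • EuclideanSpace.single (Fin.last l) (1 : ℝ))
    (hqinj : Function.Injective q)
    -- the point sets U, Q and P_Γ = U ∪ Q
    (U Q PΓ : Set (EuclideanSpace ℝ (Fin (l + 1))))
    (hU : U = {x | ∃ i : Fin (l + 1),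
      x = EuclideanSpace.single i (1 : ℝ) ∨ x = -EuclideanSpace.single i (1 : ℝ)})
    (hQ : Q = Set.range q)
    (hP : PΓ = U ∪ Q)
    (n z : ℕ) (hn : n = 2 * (l + 1) + m) (hz : z = l + 1) :
    (∃ a : Fin l → ℝ, (∀ i, a i = 1 ∨ a i = -1) ∧ ∀ j : Fin m, ∃ k : Fin 3,
        a (var j k) = sgn j k) ↔
      (∃ T ⊆ PΓ, T.ncard = n - z ∧ ∃ w : EuclideanSpace ℝ (Fin (l + 1)), ‖w‖ = 1 ∧
        ∀ x ∈ T, @inner ℝ _ _ w x ≥ 1 / Real.sqrt ((l : ℝ) + 1)) :=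
  satisfiable_iff_margin_general l m α hα var sgn hsgn q hq hqinj U Q PΓ hU hQ hP n z hn hz
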